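/- For every α ∈ (Fin 3)^d, every γ with T_γ ∩ S = {α} (for a given set S), and every real δ, the matrix R defined by R_β = (−1)^{ρ(α,β)}·δ for β ∈ T_γ and R_β = 0 otherwise, is a zero-sum matrix. -/

import Mathlib

/-!
A line `{update β i j | j}` meets `T_γ` only if `β` differs from `γ` off the coordinate `i`, and
then it meets `T_γ` in the two points with `j ≠ γ i`. Since `α ∈ T_γ`, one of these two values is
`α i`, so the two points lie at Hamming distances from `α` differing by one and their entries
cancel.
-/

open Finset Function

section HammingUpdate

variable {ι : Type*} [Fintype ι] {β : ι → Type*} [∀ i, DecidableEq (β i)]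

theorem hammingDist_eq_card_iff {x y : ∀ i, β i} :
    hammingDist x y = Fintype.card ι ↔ ∀ i, x i ≠ y i := by
  rw [hammingDist, card_eq_iff_eq_univ, filter_eq_self]
  simp

variable [DecidableEq ι]

theorem hammingDist_update (x y : ∀ i, β i) (i : ι) (a : β i) :
    hammingDist x (update y i a) =
      hammingDist x (update y i (x i)) + if x i = a then 0 else 1 := by
  simp only [hammingDist, card_filter, Fintype.sum_eq_add_sum_compl i, update_self, ne_eq,
    ite_not, if_true, zero_add]
  rw [add_comm]
  congr 1
  refine sum_congr rfl fun k hk => ?_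
  rw [update_of_ne (by simpa using hk), update_of_ne (by simpa using hk)]

theorem hammingDist_update_eq_card_iff (x y : ∀ i, β i) (i : ι) (a : β i) :
    hammingDist x (update y i a) = Fintype.card ι ↔ x i ≠ a ∧ ∀ k ≠ i, x k ≠ y k := by
  rw [hammingDist_eq_card_iff, forall_update_iff y fun k b => x k ≠ b]

end HammingUpdate

/-- The two values `j ≠ g` are `a` and the third element of `Fin 3`, which carry opposite signs. -/
theorem sum_ite_ne_neg_one_pow_eq_zero_of_ne {R : Type*} [CommRing R] {g a : Fin 3}
    (hga : g ≠ a) (c : ℕ) :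
    ∑ j : Fin 3, (if g ≠ j then (-1 : R) ^ (c + if a = j then 0 else 1) else 0) = 0 := by
  fin_cases g <;> fin_cases a <;> simp_all [Fin.sum_univ_three, pow_succ]

theorem sum_update_subcube_sign_eq_zero {ι R : Type*} [Fintype ι] [DecidableEq ι] [CommRing R]
    {α γ : ι → Fin 3} (hαγ : ∀ k, γ k ≠ α k) (δ : R) (β : ι → Fin 3) (i : ι) :
    ∑ j : Fin 3, (if hammingDist γ (update β i j) = Fintype.card ι then
      (-1 : R) ^ hammingDist α (update β i j) * δ else 0) = 0 := by
  simp only [hammingDist_update_eq_card_iff]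
  by_cases hβ : ∀ k ≠ i, γ k ≠ β k
  · simp only [and_iff_left hβ, ← ite_zero_mul, ← sum_mul]
    rw [sum_congr rfl fun j _ => by rw [hammingDist_update α β i j],
      sum_ite_ne_neg_one_pow_eq_zero_of_ne (hαγ i), zero_mul]
  · simp [hβ]

/-- The matrix `R` supported on `T_γ` with entries `(-1)^{ρ(α,β)} · δ` is zero-sum. -/
theorem R_zero_sum {d : ℕ} (S : Set (Fin d → Fin 3)) (α γ : Fin d → Fin 3) (δ : ℝ)
    (hγ : {β : Fin d → Fin 3 | hammingDist γ β = d} ∩ S = {α}) :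
    ∀ (β : Fin d → Fin 3) (i : Fin d),
      ∑ j : Fin 3,
        (if hammingDist γ (Function.update β i j) = d then
          ((-1 : ℝ)) ^ (hammingDist α (Function.update β i j)) * δ else 0) = 0 := by
  have hα : hammingDist γ α = d := (hγ.symm ▸ Set.mem_singleton α).1
  have hαγ : ∀ k, γ k ≠ α k := hammingDist_eq_card_iff.mp (hα.trans (Fintype.card_fin d).symm)
  simpa only [Fintype.card_fin] using sum_update_subcube_sign_eq_zero hαγ δ
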